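/- Let U₁, U₂, U₃ be unitary operators on a finite-dimensional complex Hilbert space satisfying U₁U₂U₃ = i·id and pairwise anticommuting. Consider the nine operators of the generalized Peres-Mermin square: row 1 = (U₁*⊗I, I⊗U₁*, U₁⊗U₁), row 2 = (I⊗U₂*, U₂*⊗I, U₂⊗U₂), row 3 = (U₁⊗U₂, U₂⊗U₁, U₃⊗U₃). Then the product of the three operators in each row and in each of the first two columns equals the identity on the tensor product space, and the product in the third column equals minus the identity. -/

import Mathlib

/-! Every entry of the square is a Kronecker product, so each line multiplies out factorwise to
`(ABC) ⊗ (A'B'C')`. The lines containing adjoints collapse by unitarity; the remaining two give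
`(U₁U₂U₃) ⊗ (U₂U₁U₃) = i · (-i) = 1` (anticommutation flips the sign) and
`(U₁U₂U₃) ⊗ (U₁U₂U₃) = i · i = -1`. -/

open Matrix Kronecker

section Kronecker

variable {R m n : Type*} [CommSemiring R]

theorem Matrix.kronecker_mul_kronecker_mul_kronecker [Fintype m] [Fintype n]
    (A B C : Matrix m m R) (A' B' C' : Matrix n n R) :
    A ⊗ₖ A' * (B ⊗ₖ B') * (C ⊗ₖ C') = (A * B * C) ⊗ₖ (A' * B' * C') := by
  rw [← mul_kronecker_mul, ← mul_kronecker_mul]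

theorem Matrix.smul_one_kronecker_smul_one [DecidableEq m] [DecidableEq n] (a b : R) :
    (a • 1 : Matrix m m R) ⊗ₖ (b • 1 : Matrix n n R) = (a * b) • 1 := by
  rw [smul_kronecker, kronecker_smul, one_kronecker_one, smul_smul]

end Kronecker

theorem mul_mul_eq_neg_of_anticomm {α : Type*} [Ring α] {a b : α} (c : α)
    (h : a * b = -(b * a)) : b * a * c = -(a * b * c) := by
  rw [h, neg_mul, neg_neg]

theorem generalized_peres_mermin_square_products_general (n : ℕ)
    (U₁ U₂ U₃ : Matrix (Fin n) (Fin n) ℂ)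
    (hU₁ : U₁ ∈ Matrix.unitaryGroup (Fin n) ℂ)
    (hU₂ : U₂ ∈ Matrix.unitaryGroup (Fin n) ℂ)
    (h12 : U₁ * U₂ = -(U₂ * U₁))
    (hprod : U₁ * U₂ * U₃ = Complex.I • 1) :
    let A : Fin 3 → Fin 3 → Matrix (Fin n × Fin n) (Fin n × Fin n) ℂ :=
      ![![(star U₁) ⊗ₖ 1, 1 ⊗ₖ (star U₁), U₁ ⊗ₖ U₁],
        ![1 ⊗ₖ (star U₂), (star U₂) ⊗ₖ 1, U₂ ⊗ₖ U₂],
        ![U₁ ⊗ₖ U₂, U₂ ⊗ₖ U₁, U₃ ⊗ₖ U₃]]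
    (∀ j : Fin 3, A j 0 * A j 1 * A j 2 = 1) ∧
    A 0 0 * A 1 0 * A 2 0 = 1 ∧ A 0 1 * A 1 1 * A 2 1 = 1 ∧
    A 0 2 * A 1 2 * A 2 2 = -1 := by
  intro A
  have hU₁' : star U₁ * U₁ = 1 := hU₁.1
  have hU₂' : star U₂ * U₂ = 1 := hU₂.1
  have hprod' : U₂ * U₁ * U₃ = (-Complex.I) • 1 := by
    rw [mul_mul_eq_neg_of_anticomm U₃ h12, hprod, neg_smul]
  have hI : Complex.I * -Complex.I = 1 := by rw [mul_neg, Complex.I_mul_I, neg_neg]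
  refine ⟨fun j => ?_, ?_, ?_, ?_⟩
  · fin_cases j
    · show star U₁ ⊗ₖ 1 * (1 ⊗ₖ star U₁) * (U₁ ⊗ₖ U₁) = 1
      rw [kronecker_mul_kronecker_mul_kronecker, mul_one, one_mul, hU₁', one_kronecker_one]
    · show 1 ⊗ₖ star U₂ * (star U₂ ⊗ₖ 1) * (U₂ ⊗ₖ U₂) = 1
      rw [kronecker_mul_kronecker_mul_kronecker, mul_one, one_mul, hU₂', one_kronecker_one]
    · show U₁ ⊗ₖ U₂ * (U₂ ⊗ₖ U₁) * (U₃ ⊗ₖ U₃) = 1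
      rw [kronecker_mul_kronecker_mul_kronecker, hprod, hprod', smul_one_kronecker_smul_one, hI,
        one_smul]
  · show star U₁ ⊗ₖ 1 * (1 ⊗ₖ star U₂) * (U₁ ⊗ₖ U₂) = 1
    rw [kronecker_mul_kronecker_mul_kronecker, mul_one, one_mul, hU₁', hU₂', one_kronecker_one]
  · show 1 ⊗ₖ star U₁ * (star U₂ ⊗ₖ 1) * (U₂ ⊗ₖ U₁) = 1
    rw [kronecker_mul_kronecker_mul_kronecker, mul_one, one_mul, hU₁', hU₂', one_kronecker_one]
  · show U₁ ⊗ₖ U₁ * (U₂ ⊗ₖ U₂) * (U₃ ⊗ₖ U₃) = -1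
    rw [kronecker_mul_kronecker_mul_kronecker, hprod, smul_one_kronecker_smul_one,
      Complex.I_mul_I, neg_one_smul]

theorem generalized_peres_mermin_square_products (n : ℕ)
    (U₁ U₂ U₃ : Matrix (Fin n) (Fin n) ℂ)
    (hU₁ : U₁ ∈ Matrix.unitaryGroup (Fin n) ℂ)
    (hU₂ : U₂ ∈ Matrix.unitaryGroup (Fin n) ℂ)
    (hU₃ : U₃ ∈ Matrix.unitaryGroup (Fin n) ℂ)
    (h12 : U₁ * U₂ = -(U₂ * U₁)) (h13 : U₁ * U₃ = -(U₃ * U₁))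
    (h23 : U₂ * U₃ = -(U₃ * U₂))
    (hprod : U₁ * U₂ * U₃ = Complex.I • 1) :
    let A : Fin 3 → Fin 3 → Matrix (Fin n × Fin n) (Fin n × Fin n) ℂ :=
      ![![(star U₁) ⊗ₖ 1, 1 ⊗ₖ (star U₁), U₁ ⊗ₖ U₁],
        ![1 ⊗ₖ (star U₂), (star U₂) ⊗ₖ 1, U₂ ⊗ₖ U₂],
        ![U₁ ⊗ₖ U₂, U₂ ⊗ₖ U₁, U₃ ⊗ₖ U₃]]
    (∀ j : Fin 3, A j 0 * A j 1 * A j 2 = 1) ∧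
    A 0 0 * A 1 0 * A 2 0 = 1 ∧ A 0 1 * A 1 1 * A 2 1 = 1 ∧
    A 0 2 * A 1 2 * A 2 2 = -1 :=
  generalized_peres_mermin_square_products_general n U₁ U₂ U₃ hU₁ hU₂ h12 hprod
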